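/- arXiv:1908.09103 — 7 statements merged into one kernel-verified Lean document; each statement's English description precedes it below -/
import Mathlib

section
/- Under the Setup, the following two conditions are equivalent. (Assumption 5) For each support point θ* ∈ S(p,Θ_I) there exist constants δ > 0, η > 0 such that p·(θ−θ*) ≤ −δ‖θ−θ*‖ for every θ ∈ Θ_I ∩ B(θ*,η) with θ ≠ θ*. (Assumption 5') For each support point θ* ∈ S(p,Θ_I) there exists a constant c > 0 such that p·t ≤ −c‖t‖ for every t in the tangent cone T(θ*). -/
open Filter Topology Metric RealInnerProductSpace

noncomputable section

/-- The abstract Setup (Assumption 1) of Kaido–Molinari–Stoye: a compact convex parameter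
space `Θ ⊆ ℝ^d` with nonempty interior, `J` continuously differentiable constraint
functions `g j` (inequality constraints for `j < J1`, equality constraints for
`J1 ≤ j`), with (continuous) gradients `D j`, and a direction of projection `p ≠ 0`. -/
structure PISetup (d J J1 : ℕ) where
  Θ : Set (EuclideanSpace ℝ (Fin d))
  g : Fin J → EuclideanSpace ℝ (Fin d) → ℝ
  D : Fin J → EuclideanSpace ℝ (Fin d) → EuclideanSpace ℝ (Fin d)
  p : EuclideanSpace ℝ (Fin d)
  hd : 1 ≤ d
  hJ : 1 ≤ J
  hJ1 : J1 ≤ J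
  compactΘ : IsCompact Θ
  convexΘ : Convex ℝ Θ
  intΘ_nonempty : (interior Θ).Nonempty
  hgrad : ∀ (j : Fin J) (θ : EuclideanSpace ℝ (Fin d)), HasGradientAt (g j) (D j θ) θ
  hgradCont : ∀ j : Fin J, Continuous (D j)
  hp : p ≠ 0

namespace PISetup

variable {d J J1 : ℕ}

/-- The identified set `Θ_I`. -/
def idSet (S : PISetup d J J1) : Set (EuclideanSpace ℝ (Fin d)) :=
  {θ ∈ S.Θ | ∀ j : Fin J, ((j : ℕ) < J1 → S.g j θ ≤ 0) ∧ (J1 ≤ (j : ℕ) → S.g j θ = 0)}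

/-- The support set `S(p, Θ_I)`: the maximizers of `θ ↦ ⟪p, θ⟫` over `Θ_I`. -/
def suppSet (S : PISetup d J J1) : Set (EuclideanSpace ℝ (Fin d)) :=
  {θ ∈ S.idSet | ∀ θ' ∈ S.idSet, ⟪S.p, θ'⟫ ≤ ⟪S.p, θ⟫}

/-- The criterion `Q(θ) = max{0, max_{j< J1} g_j(θ), max_{J1 ≤ j} |g_j(θ)|}`. -/
def crit (S : PISetup d J J1) (θ : EuclideanSpace ℝ (Fin d)) : ℝ :=
  max 0 (⨆ j : Fin J, if (j : ℕ) < J1 then S.g j θ else |S.g j θ|)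

/-- The ball `B(θ*, η) = {θ ∈ Θ : ‖θ - θ*‖ ≤ η}`. -/
def ball (S : PISetup d J J1) (θs : EuclideanSpace ℝ (Fin d)) (η : ℝ) :
    Set (EuclideanSpace ℝ (Fin d)) :=
  {θ ∈ S.Θ | ‖θ - θs‖ ≤ η}

/-- The supporting hyperplane `H(p, Θ_I)`, described relative to a support point `θ*`. -/
def hyper (S : PISetup d J J1) (θs : EuclideanSpace ℝ (Fin d)) :
    Set (EuclideanSpace ℝ (Fin d)) :=
  {θ ∈ S.Θ | ⟪S.p, θ⟫ = ⟪S.p, θs⟫}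

/-- The tangent cone `T(θ*)` to `Θ_I` at `θ*`. -/
def tangentConeAt (S : PISetup d J J1) (θs : EuclideanSpace ℝ (Fin d)) :
    Set (EuclideanSpace ℝ (Fin d)) :=
  insert 0 {t | ∃ u : ℕ → EuclideanSpace ℝ (Fin d),
    (∀ n, u n ∈ S.idSet ∧ u n ≠ θs) ∧ Tendsto u atTop (𝓝 θs) ∧
    Tendsto (fun n => ‖u n - θs‖⁻¹ • (u n - θs)) atTop (𝓝 (‖t‖⁻¹ • t))}

/-- The linearized cone `L(θ*)`. -/
def linConeAt (S : PISetup d J J1) (θs : EuclideanSpace ℝ (Fin d)) :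
    Set (EuclideanSpace ℝ (Fin d)) :=
  {t | (∀ j : Fin J, (j : ℕ) < J1 → S.g j θs = 0 → ⟪S.D j θs, t⟫ ≤ 0) ∧
       (∀ j : Fin J, J1 ≤ (j : ℕ) → ⟪S.D j θs, t⟫ = 0)}

/-- The active set `J*(θ)` of (equality or inequality) constraints. -/
def activeAt (S : PISetup d J J1) (θ : EuclideanSpace ℝ (Fin d)) : Set (Fin J) :=
  {j | ((j : ℕ) < J1 ∧ S.g j θ = 0) ∨ J1 ≤ (j : ℕ)}

end PISetup

/-- Lemma 1 (third equivalence): Assumption 5 ⇔ Assumption 5′. -/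
theorem assumption5_iff_assumption5' {d J J1 : ℕ} (S : PISetup d J J1)
    (hIne : S.idSet.Nonempty) (hIint : S.idSet ⊆ interior S.Θ) :
    (∀ θs ∈ S.suppSet, ∃ δ > (0:ℝ), ∃ η > (0:ℝ),
        ∀ θ ∈ S.idSet, ‖θ - θs‖ ≤ η → θ ≠ θs →
          ⟪S.p, θ - θs⟫ ≤ -δ * ‖θ - θs‖) ↔
    (∀ θs ∈ S.suppSet, ∃ c > (0:ℝ),
        ∀ t ∈ S.tangentConeAt θs, ⟪S.p, t⟫ ≤ -c * ‖t‖) := by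
  constructor
  · -- Assumption 5 → Assumption 5'
    intro h θs hθs
    obtain ⟨δ, hδ, η, hη, hmain⟩ := h θs hθs
    refine ⟨δ, hδ, ?_⟩
    intro t ht
    by_cases ht0 : t = 0
    · simp [ht0]
    rcases ht with ht | ⟨u, hu1, hu2, hu3⟩
    · exact absurd ht ht0
    have htn : (0:ℝ) < ‖t‖ := norm_pos_iff.mpr ht0
    -- eventually the normalized inner products are ≤ -δ
    have hev : ∀ᶠ n in atTop, ⟪S.p, ‖u n - θs‖⁻¹ • (u n - θs)⟫ ≤ -δ := by
      have hball : ∀ᶠ n in atTop, u n ∈ Metric.closedBall θs η :=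
        hu2.eventually (Metric.closedBall_mem_nhds θs hη)
      filter_upwards [hball] with n hn
      have hnorm : ‖u n - θs‖ ≤ η := by
        rw [Metric.mem_closedBall, dist_eq_norm] at hn; exact hn
      have hle := hmain (u n) (hu1 n).1 hnorm (hu1 n).2
      have hpos : (0:ℝ) < ‖u n - θs‖ :=
        norm_pos_iff.mpr (sub_ne_zero.mpr (hu1 n).2)
      rw [real_inner_smul_right]
      calc ‖u n - θs‖⁻¹ * ⟪S.p, u n - θs⟫
          ≤ ‖u n - θs‖⁻¹ * (-δ * ‖u n - θs‖) :=
            mul_le_mul_of_nonneg_left hle (inv_nonneg.mpr hpos.le)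
        _ = -δ := by field_simp
    have htend : Tendsto (fun n => ⟪S.p, ‖u n - θs‖⁻¹ • (u n - θs)⟫) atTop
        (𝓝 ⟪S.p, ‖t‖⁻¹ • t⟫) :=
      (Filter.Tendsto.inner tendsto_const_nhds hu3)
    have hlim : ⟪S.p, ‖t‖⁻¹ • t⟫ ≤ -δ := le_of_tendsto htend hev
    rw [real_inner_smul_right] at hlim
    have : ⟪S.p, t⟫ ≤ ‖t‖ * (-δ) := by
      have := mul_le_mul_of_nonneg_left hlim htn.le
      rw [← mul_assoc, mul_inv_cancel₀ htn.ne', one_mul] at this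
      exact this
    linarith [this]
  · -- Assumption 5' → Assumption 5
    intro h θs hθs
    obtain ⟨c, hc, hmain⟩ := h θs hθs
    by_contra hcon
    push_neg at hcon
    have H : ∀ n : ℕ, ∃ θ ∈ S.idSet, ‖θ - θs‖ ≤ ((n:ℝ)+1)⁻¹ ∧ θ ≠ θs ∧
        -((n:ℝ)+1)⁻¹ * ‖θ - θs‖ < ⟪S.p, θ - θs⟫ := by
      intro n
      have hp : (0:ℝ) < ((n:ℝ)+1)⁻¹ := by positivity
      obtain ⟨θ, h1, h2, h3, h4⟩ := hcon _ hp _ hp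
      exact ⟨θ, h1, h2, h3, h4⟩
    choose f hf1 hf2 hf3 hf4 using H
    set v : ℕ → EuclideanSpace ℝ (Fin d) := fun n => ‖f n - θs‖⁻¹ • (f n - θs) with hv
    have hfpos : ∀ n, (0:ℝ) < ‖f n - θs‖ := fun n =>
      norm_pos_iff.mpr (sub_ne_zero.mpr (hf3 n))
    have hvs : ∀ n, v n ∈ Metric.sphere (0 : EuclideanSpace ℝ (Fin d)) 1 := by
      intro n
      rw [mem_sphere_zero_iff_norm, hv, norm_smul, norm_inv, norm_norm,
        inv_mul_cancel₀ (hfpos n).ne']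
    obtain ⟨w, hw, φ, hφ, hconv⟩ :=
      (isCompact_sphere (0 : EuclideanSpace ℝ (Fin d)) 1).tendsto_subseq hvs
    have hwn : ‖w‖ = 1 := mem_sphere_zero_iff_norm.mp hw
    have hw0 : w ≠ 0 := by intro h0; rw [h0, norm_zero] at hwn; norm_num at hwn
    -- w is in the tangent cone
    have hwT : w ∈ S.tangentConeAt θs := by
      right
      refine ⟨f ∘ φ, fun n => ⟨hf1 _, hf3 _⟩, ?_, ?_⟩
      · rw [tendsto_iff_norm_sub_tendsto_zero]
        apply squeeze_zero (fun n => norm_nonneg _) (fun n => ?_)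
          tendsto_one_div_add_atTop_nhds_zero_nat
        calc ‖(f ∘ φ) n - θs‖ ≤ ((φ n : ℝ)+1)⁻¹ := hf2 _
          _ ≤ 1 / ((n:ℝ)+1) := by
              rw [one_div]
              have hmn : ((n:ℝ)) ≤ (φ n : ℝ) := Nat.cast_le.mpr hφ.le_apply
              apply inv_anti₀ (by positivity)
              linarith
      · rw [hwn, inv_one, one_smul]
        exact hconv
    have hle := hmain w hwT
    rw [hwn, mul_one] at hle
    -- but the inner product limit is ≥ 0
    have hlow : ∀ n : ℕ, -((n:ℝ)+1)⁻¹ ≤ ⟪S.p, v (φ n)⟫ := by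
      intro n
      have h4 := hf4 (φ n)
      have hpos := hfpos (φ n)
      have : -((φ n : ℝ)+1)⁻¹ ≤ ⟪S.p, v (φ n)⟫ := by
        rw [hv]
        simp only []
        rw [real_inner_smul_right]
        have := mul_le_mul_of_nonneg_left h4.le (inv_nonneg.mpr hpos.le)
        calc -((φ n : ℝ)+1)⁻¹
            = ‖f (φ n) - θs‖⁻¹ * (-((φ n : ℝ)+1)⁻¹ * ‖f (φ n) - θs‖) := by
              field_simp
          _ ≤ ‖f (φ n) - θs‖⁻¹ * ⟪S.p, f (φ n) - θs⟫ := this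
      refine le_trans ?_ this
      have hmn : ((n:ℝ)) ≤ (φ n : ℝ) := Nat.cast_le.mpr hφ.le_apply
      have hmono : ((φ n : ℝ)+1)⁻¹ ≤ ((n:ℝ)+1)⁻¹ :=
        inv_anti₀ (by positivity) (by linarith)
      linarith
    have htend : Tendsto (fun n => ⟪S.p, v (φ n)⟫) atTop (𝓝 ⟪S.p, w⟫) :=
      Filter.Tendsto.inner tendsto_const_nhds hconv
    have h0le : (0:ℝ) ≤ ⟪S.p, w⟫ := by
      have hneg : Tendsto (fun n : ℕ => -((n:ℝ)+1)⁻¹) atTop (𝓝 0) := by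
        have := (tendsto_one_div_add_atTop_nhds_zero_nat :
          Tendsto (fun n : ℕ => 1 / ((n:ℝ) + 1)) atTop (𝓝 0))
        simpa [one_div] using this.neg
      have := le_of_tendsto_of_tendsto' hneg htend hlow
      simpa using this
    linarith
end
end

section
/- Under the Setup, the following two conditions are equivalent. (Assumption 7) For each support point θ* ∈ S(p,Θ_I) there exist constants δ < 0 and ε > 0 such that every unit vector t ∈ ℝ^d with p·t ≥ δ satisfies max{ max_{j∈J1*(θ*)} D_j(θ*)·t , max_{J1<j≤J} |D_j(θ*)·t| } > ε. (Assumption 7') For each support point θ* ∈ S(p,Θ_I) there exists a constant c > 0 such that p·t ≤ −c‖t‖ for every t in the linearized cone L(θ*). -/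
open Filter Topology Metric RealInnerProductSpace

noncomputable section

/-!
Both directions are pointwise in the support point. If unit directions `t` with `⟪p, t⟫ ≥ δ`
violate some linearized constraint, then unit directions of the linearized cone satisfy
`⟪p, t⟫ < δ`, and since it is a cone, rescaling gives Assumption 7' with `c = -δ`. Conversely,
under Assumption 7' the largest linearized violation is positive on the compact set of unit
vectors with `⟪p, t⟫ ≥ -c/2`, hence bounded below there by some `ε > 0`.
-/

theorem le_mul_norm_of_forall_norm_eq_one {E : Type*} [NormedAddCommGroup E] [NormedSpace ℝ E]
    {C : Set E} (hC : ∀ t ∈ C, ∀ r : ℝ, 0 < r → r • t ∈ C) (ℓ : E →ₗ[ℝ] ℝ) {δ : ℝ}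
    (h : ∀ t ∈ C, ‖t‖ = 1 → ℓ t ≤ δ) : ∀ t ∈ C, ℓ t ≤ δ * ‖t‖ := by
  intro t ht
  rcases eq_or_ne t 0 with rfl | ht0
  · simp
  have hnorm : 0 < ‖t‖ := norm_pos_iff.mpr ht0
  have hunit : ℓ (‖t‖⁻¹ • t) ≤ δ :=
    h _ (hC t ht _ (inv_pos.mpr hnorm)) (norm_smul_inv_norm ht0)
  rw [map_smul, smul_eq_mul, inv_mul_le_iff₀ hnorm] at hunit
  linarith

theorem exists_forall_norm_eq_one_exists_lt {E ι : Type*} [NormedAddCommGroup E] [ProperSpace E]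
    [Fintype ι] [Nonempty ι] {a : ι → E → ℝ} (ha : ∀ i, Continuous (a i)) {ℓ : E → ℝ}
    (hℓ : Continuous ℓ) {c : ℝ} (hc : 0 < c)
    (h : ∀ t, ‖t‖ = 1 → (∀ i, a i t ≤ 0) → ℓ t ≤ -c) :
    ∃ δ < (0 : ℝ), ∃ ε > (0 : ℝ), ∀ t, ‖t‖ = 1 → δ ≤ ℓ t → ∃ i, ε < a i t := by
  set K := sphere (0 : E) 1 ∩ {t | -(c / 2) ≤ ℓ t}
  have hK : IsCompact K := (isCompact_sphere 0 1).inter_right (isClosed_le continuous_const hℓ)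
  set V : E → ℝ := fun t => Finset.univ.sup' Finset.univ_nonempty (a · t)
  have hV : Continuous V := Continuous.finset_sup'_apply _ fun i _ => ha i
  have hVpos : ∀ t ∈ K, 0 < V t := by
    rintro t ⟨hsphere, hℓt : -(c / 2) ≤ ℓ t⟩
    by_contra! hVt
    have hℓle := h t (mem_sphere_zero_iff_norm.mp hsphere) fun i =>
      (Finset.le_sup' (a · t) (Finset.mem_univ i)).trans hVt
    linarith
  obtain ⟨ε, hε, hεV⟩ := hK.exists_forall_le' hV.continuousOn hVpos
  refine ⟨-(c / 2), by linarith, ε / 2, by linarith, fun t ht hℓt => ?_⟩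
  have hVt : ε / 2 < V t := by linarith [hεV t ⟨mem_sphere_zero_iff_norm.mpr ht, hℓt⟩]
  obtain ⟨i, -, hi⟩ := (Finset.lt_sup'_iff _).mp hVt
  exact ⟨i, hi⟩

namespace PISetup

variable {d J J1 : ℕ} (S : PISetup d J J1) (θs : EuclideanSpace ℝ (Fin d))

/-- Inactive inequality constraints contribute `0`, so that `t ∈ L(θs)` iff no `linViolation`
is positive, and a violation above `ε > 0` comes from an active or an equality constraint. -/
def linViolation (j : Fin J) (t : EuclideanSpace ℝ (Fin d)) : ℝ :=
  if (j : ℕ) < J1 then (if S.g j θs = 0 then ⟪S.D j θs, t⟫ else 0) else |⟪S.D j θs, t⟫|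

theorem continuous_linViolation (j : Fin J) : Continuous (S.linViolation θs j) := by
  unfold linViolation
  split_ifs
  · exact continuous_const.inner continuous_id
  · exact continuous_const
  · exact (continuous_const.inner continuous_id).abs

theorem mem_linConeAt_iff {t : EuclideanSpace ℝ (Fin d)} :
    t ∈ S.linConeAt θs ↔ ∀ j, S.linViolation θs j t ≤ 0 := by
  simp only [linConeAt, linViolation, Set.mem_ofPred_eq]
  refine ⟨fun ⟨hineq, heq⟩ j => ?_, fun h => ⟨fun j hj hg => ?_, fun j hj => ?_⟩⟩
  · split_ifs with hj hg
    · exact hineq j hj hg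
    · exact le_rfl
    · exact (abs_eq_zero.mpr (heq j (not_lt.mp hj))).le
  · simpa [hj, hg] using h j
  · simpa [not_lt.mpr hj] using h j

theorem lt_linViolation_iff {ε : ℝ} (hε : 0 < ε) {j : Fin J} {t : EuclideanSpace ℝ (Fin d)} :
    ε < S.linViolation θs j t ↔
      ((j : ℕ) < J1 ∧ S.g j θs = 0 ∧ ε < ⟪S.D j θs, t⟫) ∨
        (J1 ≤ (j : ℕ) ∧ ε < |⟪S.D j θs, t⟫|) := by
  unfold linViolation
  split_ifs with hj hg
  · simp [hj, hg]
  · simp [hj, hg, hε.not_gt]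
  · simp [hj, not_lt.mp hj]

theorem smul_mem_linConeAt {t : EuclideanSpace ℝ (Fin d)} (ht : t ∈ S.linConeAt θs) {r : ℝ}
    (hr : 0 ≤ r) : r • t ∈ S.linConeAt θs := by
  refine ⟨fun j hj hg => ?_, fun j hj => ?_⟩
  · rw [real_inner_smul_right]
    exact mul_nonpos_of_nonneg_of_nonpos hr (ht.1 j hj hg)
  · rw [real_inner_smul_right, ht.2 j hj, mul_zero]

end PISetup

/-- In Assumption 7, the statement `max{max_{j ∈ J1*(θ*)} D_j(θ*)·t, max_{J1<j≤J} |D_j(θ*)·t|} > ε` is rendered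
as the existence of some active inequality constraint `j` with `D_j(θ*)·t > ε` or some
equality constraint `j` with `|D_j(θ*)·t| > ε`. -/
theorem assumption7_iff_assumption7'_general {d J J1 : ℕ} (S : PISetup d J J1) :
    (∀ θs ∈ S.suppSet, ∃ δ < (0:ℝ), ∃ ε > (0:ℝ),
        ∀ t : EuclideanSpace ℝ (Fin d), ‖t‖ = 1 → δ ≤ ⟪S.p, t⟫ →
          ∃ j : Fin J, ((j : ℕ) < J1 ∧ S.g j θs = 0 ∧ ε < ⟪S.D j θs, t⟫) ∨
            (J1 ≤ (j : ℕ) ∧ ε < |⟪S.D j θs, t⟫|)) ↔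
    (∀ θs ∈ S.suppSet, ∃ c > (0:ℝ),
        ∀ t ∈ S.linConeAt θs, ⟪S.p, t⟫ ≤ -c * ‖t‖) := by
  refine ⟨fun h7 θs hθs => ?_, fun h7' θs hθs => ?_⟩
  · obtain ⟨δ, hδ, ε, hε, h⟩ := h7 θs hθs
    have hunit : ∀ t ∈ S.linConeAt θs, ‖t‖ = 1 → innerₛₗ ℝ S.p t ≤ δ := by
      intro t ht htn
      by_contra! hδt
      obtain ⟨j, hj⟩ := h t htn hδt.le
      linarith [(S.mem_linConeAt_iff θs).mp ht j, (S.lt_linViolation_iff θs hε).mpr hj]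
    refine ⟨-δ, neg_pos.mpr hδ, fun t ht => ?_⟩
    simpa using le_mul_norm_of_forall_norm_eq_one
      (fun t ht r hr => S.smul_mem_linConeAt θs ht hr.le) _ hunit t ht
  · obtain ⟨c, hc, h⟩ := h7' θs hθs
    have : Nonempty (Fin J) := ⟨⟨0, S.hJ⟩⟩
    obtain ⟨δ, hδ, ε, hε, hviol⟩ := exists_forall_norm_eq_one_exists_lt
      (S.continuous_linViolation θs) (continuous_const.inner continuous_id) hc
      fun t htn hL => by simpa [htn] using h t ((S.mem_linConeAt_iff θs).mpr hL)
    exact ⟨δ, hδ, ε, hε, fun t htn hδt =>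
      (hviol t htn hδt).imp fun j => (S.lt_linViolation_iff θs hε).mp⟩

/-- Lemma 1 (fifth equivalence): Assumption 7 ⇔ Assumption 7′.  In Assumption 7, the
statement `max{max_{j ∈ J1*(θ*)} D_j(θ*)·t, max_{J1<j≤J} |D_j(θ*)·t|} > ε` is rendered
as the existence of some active inequality constraint `j` with `D_j(θ*)·t > ε` or some
equality constraint `j` with `|D_j(θ*)·t| > ε`. -/
theorem assumption7_iff_assumption7' {d J J1 : ℕ} (S : PISetup d J J1)
    (hIne : S.idSet.Nonempty) (hIint : S.idSet ⊆ interior S.Θ) :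
    (∀ θs ∈ S.suppSet, ∃ δ < (0:ℝ), ∃ ε > (0:ℝ),
        ∀ t : EuclideanSpace ℝ (Fin d), ‖t‖ = 1 → δ ≤ ⟪S.p, t⟫ →
          ∃ j : Fin J, ((j : ℕ) < J1 ∧ S.g j θs = 0 ∧ ε < ⟪S.D j θs, t⟫) ∨
            (J1 ≤ (j : ℕ) ∧ ε < |⟪S.D j θs, t⟫|)) ↔
    (∀ θs ∈ S.suppSet, ∃ c > (0:ℝ),
        ∀ t ∈ S.linConeAt θs, ⟪S.p, t⟫ ≤ -c * ‖t‖) :=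
  assumption7_iff_assumption7'_general S
end
end

section
/- Under the Setup, if J1 < J (i.e., at least one equality constraint is present), then Assumption 2 (Degeneracy) fails. Here Assumption 2 states: for each support point θ* ∈ S(p,Θ_I) there exist constants δ > 0, η > 0, M > 0, C > 0 such that, with Θ_I^{−ε} = {θ ∈ Θ_I : d(θ, Θ \ Θ_I) ≥ ε}, for every ε ∈ [0,δ] one has (i) max_{1≤j≤J} g_j(θ) ≤ −Cε for all θ ∈ Θ_I^{−ε} ∩ B(θ*,η), and (ii) d(θ, Θ_I^{−ε}) ≤ Mε for all θ ∈ Θ_I ∩ B(θ*,η). -/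
open Filter Topology Metric RealInnerProductSpace

noncomputable section

namespace PISetup

variable {d J J1 : ℕ}

/-- The `ε`-shrunk identified set `Θ_I^{-ε} = {θ ∈ Θ_I : d(θ, Θ \ Θ_I) ≥ ε}`. -/
def shrunk (S : PISetup d J J1) (ε : ℝ) : Set (EuclideanSpace ℝ (Fin d)) :=
  {θ ∈ S.idSet | ε ≤ infDist θ (S.Θ \ S.idSet)}

/-- Assumption 2 (Degeneracy), from CHT: for each support point `θ*` there are
`δ, η, M, C > 0` such that for every `ε ∈ [0, δ]`, (i) `max_j g_j(θ) ≤ -Cε` on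
`Θ_I^{-ε} ∩ B(θ*, η)`, and (ii) `d(θ, Θ_I^{-ε}) ≤ Mε` on `Θ_I ∩ B(θ*, η)` (the
distance, taken in `[0,∞]` so that the distance to the empty set is `∞`). -/
def degeneracy (S : PISetup d J J1) : Prop :=
  ∀ θs ∈ S.suppSet, ∃ δ > (0:ℝ), ∃ η > (0:ℝ), ∃ M > (0:ℝ), ∃ C > (0:ℝ),
    ∀ ε ∈ Set.Icc (0:ℝ) δ,
      (∀ θ ∈ S.shrunk ε, ‖θ - θs‖ ≤ η → ∀ j : Fin J, S.g j θ ≤ -C * ε) ∧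
      (∀ θ ∈ S.idSet, ‖θ - θs‖ ≤ η →
        EMetric.infEdist θ (S.shrunk ε) ≤ ENNReal.ofReal (M * ε))

end PISetup

/-- With at least one equality constraint present, Assumption 2 (Degeneracy) fails. -/
theorem equality_constraints_preclude_degeneracy {d J J1 : ℕ} (S : PISetup d J J1)
    (hIne : S.idSet.Nonempty) (hIint : S.idSet ⊆ interior S.Θ)
    (hlt : J1 < J) : ¬ S.degeneracy := by
  intro hdeg
  have hgc : ∀ j : Fin J, Continuous (S.g j) := fun j =>
    continuous_iff_continuousAt.2 fun θ => (S.hgrad j θ).hasFDerivAt.continuousAt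
  have hclosed : IsClosed S.idSet := by
    have heq : S.idSet = S.Θ ∩ ⋂ j : Fin J,
        ({θ | (j:ℕ) < J1 → S.g j θ ≤ 0} ∩ {θ | J1 ≤ (j:ℕ) → S.g j θ = 0}) := by
      ext θ; simp only [PISetup.idSet, Set.mem_setOf_eq, Set.mem_inter_iff, Set.mem_iInter,
        Set.mem_sep_iff, forall_and]
    rw [heq]
    refine S.compactΘ.isClosed.inter (isClosed_iInter fun j => IsClosed.inter ?_ ?_)
    · by_cases h : (j:ℕ) < J1
      · simpa [h] using isClosed_le (hgc j) continuous_const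
      · convert isClosed_univ using 1; ext θ; simp [h]
    · by_cases h : J1 ≤ (j:ℕ)
      · simpa [h] using isClosed_eq (hgc j) continuous_const
      · convert isClosed_univ using 1; ext θ; simp [h]
  have hsub : S.idSet ⊆ S.Θ := fun θ hθ => hθ.1
  have hcomp : IsCompact S.idSet := S.compactΘ.of_isClosed_subset hclosed hsub
  have hcont : Continuous (fun θ : EuclideanSpace ℝ (Fin d) => ⟪S.p, θ⟫) :=
    continuous_const.inner continuous_id
  obtain ⟨θs, hθs, hmax⟩ := hcomp.exists_isMaxOn hIne hcont.continuousOn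
  obtain ⟨δ, hδ, η, hη, M, hM, C, hC, h⟩ := hdeg θs ⟨hθs, fun θ' h' => hmax h'⟩
  set ε := min δ (η / (2 * M)) with hεdef
  have hε0 : 0 < ε := lt_min hδ (by positivity)
  obtain ⟨h1, h2⟩ := h ε ⟨le_of_lt hε0, min_le_left _ _⟩
  have hMε : M * ε < η := by
    have h3 : ε ≤ η / (2 * M) := min_le_right _ _
    have : M * ε ≤ M * (η / (2 * M)) := by nlinarith
    have h4 : M * (η / (2 * M)) = η / 2 := by field_simp
    nlinarith
  have hinf : EMetric.infEdist θs (S.shrunk ε) < ENNReal.ofReal η := by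
    refine lt_of_le_of_lt (h2 θs hθs (by simp [hη.le])) ?_
    exact (ENNReal.ofReal_lt_ofReal_iff hη).2 hMε
  obtain ⟨y, hy, hedist⟩ := EMetric.infEdist_lt_iff.1 hinf
  have hdist : ‖y - θs‖ ≤ η := by
    have := edist_lt_ofReal.1 hedist
    rw [dist_comm, dist_eq_norm] at this
    exact this.le
  set j : Fin J := ⟨J1, hlt⟩ with hjdef
  have hle : S.g j y ≤ -C * ε := h1 y hy hdist j
  have hzero : S.g j y = 0 := (hy.1.2 j).2 (le_refl _)
  nlinarith
end
end

section
/- Under the Setup, the following three conditions are equivalent. (Assumption 2, Degeneracy) For each support point θ* ∈ S(p,Θ_I) there exist δ, η, M, C > 0 such that, with Θ_I^{−ε} = {θ ∈ Θ_I : d(θ, Θ \ Θ_I) ≥ ε}, for every ε ∈ [0,δ]: max_{1≤j≤J} g_j(θ) ≤ −Cε for all θ ∈ Θ_I^{−ε} ∩ B(θ*,η), and d(θ, Θ_I^{−ε}) ≤ Mε for all θ ∈ Θ_I ∩ B(θ*,η). (Assumption 6) J1 = J and for each support point θ* there exist δ, ε > 0 and a unit vector t with D_j(θ*)·t ≤ −ε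 for every j with g_j(θ*) ≥ −δ. (No equalities plus MFCQ) J1 = J and for each support point θ* ∈ S(p,Θ_I) there exists t ∈ ℝ^d with D_j(θ*)·t < 0 for every j ∈ J*(θ*). -/
open Filter Topology Metric RealInnerProductSpace

noncomputable section

/-!
Near a support point `θ*`, the distance part of Assumption 2 yields points of `Θ_I^{-ε}` within
`O(ε)` of `θ*` at which every constraint is below `-Cε`. A first-order expansion at `θ*` turns
the direction towards such a point into a uniform descent direction for the nearly active
constraints, and no equality constraint can vanish at such a point. Conversely, moving a distance
`Mε` along a uniform descent direction pushes every constraint below `-Lε`, with `L` a local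
Lipschitz constant of the `g j`, so the moved point is at distance at least `ε` from `Θ \ Θ_I`;
moving backwards from a point of `Θ_I^{-ε}` bounds the constraints there. Since there are finitely
many constraints, MFCQ at `θ*` already gives Assumption 6.
-/

theorem Convex.abs_sub_sub_inner_le_of_hasGradientAt {E : Type*} [NormedAddCommGroup E]
    [InnerProductSpace ℝ E] [CompleteSpace E] {f : E → ℝ} {f' : E → E} {s : Set E}
    (hs : Convex ℝ s) (hf : ∀ x ∈ s, HasGradientAt f (f' x) x) {v : E} {κ : ℝ}
    (hκ : ∀ x ∈ s, ‖f' x - v‖ ≤ κ) {x y : E} (hx : x ∈ s) (hy : y ∈ s) :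
    |f y - f x - ⟪v, y - x⟫| ≤ κ * ‖y - x‖ := by
  have h := hs.norm_image_sub_le_of_norm_hasFDerivWithin_le' (𝕜 := ℝ)
    (f' := fun x => InnerProductSpace.toDual ℝ E (f' x))
    (φ := InnerProductSpace.toDual ℝ E v) (fun x hx => (hf x hx).hasFDerivAt.hasFDerivWithinAt)
    (fun x hx => by rw [← map_sub, LinearIsometryEquiv.norm_map]; exact hκ x hx) hx hy
  simpa only [InnerProductSpace.toDual_apply_apply, Real.norm_eq_abs] using h

theorem exists_norm_eq_one_forall_inner_le_neg_div {E ι : Type*} [NormedAddCommGroup E]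
    [InnerProductSpace ℝ E] [Nontrivial E] {A : ι → Prop} {v : ι → E} {x : E} {a r : ℝ}
    (ha : 0 < a) (hx : ‖x‖ ≤ r) (h : ∀ i, A i → ⟪v i, x⟫ ≤ -a) :
    ∃ u : E, ‖u‖ = 1 ∧ ∀ i, A i → ⟪v i, u⟫ ≤ -(a / r) := by
  rcases eq_or_ne x 0 with rfl | hx0
  · obtain ⟨u, hu⟩ := exists_norm_eq E zero_le_one
    exact ⟨u, hu, fun i hi => absurd (h i hi) (by simpa using ha)⟩
  have hxpos : 0 < ‖x‖ := norm_pos_iff.2 hx0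
  refine ⟨‖x‖⁻¹ • x, norm_smul_inv_norm hx0, fun i hi => ?_⟩
  calc ⟪v i, ‖x‖⁻¹ • x⟫ = ‖x‖⁻¹ * ⟪v i, x⟫ := real_inner_smul_right _ _ _
    _ ≤ ‖x‖⁻¹ * (-a) := mul_le_mul_of_nonneg_left (h i hi) (by positivity)
    _ = -(a / ‖x‖) := by ring
    _ ≤ -(a / r) := neg_le_neg (div_le_div_of_nonneg_left ha.le hxpos hx)

theorem exists_pos_forall_le_neg_of_eq_zero_imp_neg {ι : Type*} [Finite ι] {a b : ι → ℝ}
    (ha : ∀ i, a i ≤ 0) (hb : ∀ i, a i = 0 → b i < 0) :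
    ∃ η > 0, ∀ i, -η ≤ a i → b i ≤ -η := by
  have h : ∀ i, ∀ᶠ η in 𝓝[>] (0 : ℝ), -η ≤ a i → b i ≤ -η := fun i => by
    rcases (ha i).lt_or_eq with hi | hi
    · filter_upwards [(eventually_lt_nhds (neg_pos.2 hi)).filter_mono nhdsWithin_le_nhds]
        with η hη hη'
      linarith
    · filter_upwards [(eventually_le_nhds (neg_pos.2 (hb i hi))).filter_mono nhdsWithin_le_nhds]
        with η hη _
      linarith
  obtain ⟨η, hη, hpos⟩ := ((eventually_all.2 h).and self_mem_nhdsWithin).exists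
  exact ⟨η, hpos, hη⟩

theorem eventually_mul_le_nhds_zero (a : ℝ) {r : ℝ} (hr : 0 < r) :
    ∀ᶠ ε in 𝓝 (0 : ℝ), a * ε ≤ r := by
  have h : Tendsto (fun ε => a * ε) (𝓝 0) (𝓝 0) := by
    simpa using (tendsto_id (x := 𝓝 (0 : ℝ))).const_mul a
  exact h.eventually (eventually_le_nhds hr)

theorem IsCompact.nonempty_diff_of_subset_interior {X : Type*} [TopologicalSpace X]
    [T2Space X] [PreconnectedSpace X] [NoncompactSpace X] {K A : Set X} (hK : IsCompact K)
    (hA : A ⊆ interior K) (hAne : A.Nonempty) : (K \ A).Nonempty := by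
  by_contra h
  rw [Set.not_nonempty_iff_eq_empty, Set.sdiff_eq_empty] at h
  have hKopen : IsOpen K := interior_eq_iff_isOpen.1 (interior_subset.antisymm (h.trans hA))
  have hKuniv := IsClopen.eq_univ ⟨hK.isClosed, hKopen⟩ (hAne.mono (hA.trans interior_subset))
  exact noncompact_univ X (hKuniv ▸ hK)

namespace PISetup

variable {d J J1 : ℕ}

theorem nontrivial_space (S : PISetup d J J1) : Nontrivial (EuclideanSpace ℝ (Fin d)) :=
  nontrivial_of_ne _ _ S.hp

variable (S : PISetup d J J1)

def DegenerateAt (θs : EuclideanSpace ℝ (Fin d)) : Prop :=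
  ∃ δ > (0:ℝ), ∃ η > (0:ℝ), ∃ M > (0:ℝ), ∃ C > (0:ℝ),
    ∀ ε ∈ Set.Icc (0:ℝ) δ,
      (∀ θ ∈ S.shrunk ε, ‖θ - θs‖ ≤ η → ∀ j : Fin J, S.g j θ ≤ -C * ε) ∧
      (∀ θ ∈ S.idSet, ‖θ - θs‖ ≤ η →
        infEDist θ (S.shrunk ε) ≤ ENNReal.ofReal (M * ε))

-- Assumption 6 of the paper, at the point `θs`.
def UniformMFCQAt (θs : EuclideanSpace ℝ (Fin d)) : Prop :=
  ∃ δ > (0:ℝ), ∃ ε > (0:ℝ), ∃ t : EuclideanSpace ℝ (Fin d), ‖t‖ = 1 ∧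
    ∀ j : Fin J, -δ ≤ S.g j θs → ⟪S.D j θs, t⟫ ≤ -ε

def MFCQAt (θs : EuclideanSpace ℝ (Fin d)) : Prop :=
  ∃ t : EuclideanSpace ℝ (Fin d), ∀ j : Fin J, S.g j θs = 0 → ⟪S.D j θs, t⟫ < 0

theorem continuous_g (j : Fin J) : Continuous (S.g j) :=
  continuous_iff_continuousAt.2 fun θ => (S.hgrad j θ).differentiableAt.continuousAt

theorem eventually_norm_D_sub_le (θs : EuclideanSpace ℝ (Fin d)) {κ : ℝ} (hκ : 0 < κ) :
    ∀ᶠ θ in 𝓝 θs, ∀ j, ‖S.D j θ - S.D j θs‖ ≤ κ :=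
  eventually_all.2 fun j => by
    simpa only [mem_closedBall, dist_eq_norm] using
      (S.hgradCont j).continuousAt.eventually (closedBall_mem_nhds _ hκ)

theorem isClosed_idSet : IsClosed S.idSet := by
  refine S.compactΘ.isClosed.inter ?_
  show IsClosed {θ | ∀ j : Fin J, _}
  simp only [Set.ofPred_forall, Set.ofPred_and]
  exact isClosed_iInter fun j =>
    (isClosed_iInter fun _ => isClosed_le (S.continuous_g j) continuous_const).inter
      (isClosed_iInter fun _ => isClosed_eq (S.continuous_g j) continuous_const)

theorem suppSet_nonempty (hIne : S.idSet.Nonempty) : S.suppSet.Nonempty := by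
  obtain ⟨θs, hθs, hmax⟩ :=
    (S.compactΘ.of_isClosed_subset S.isClosed_idSet (Set.sep_subset _ _)).exists_isMaxOn hIne
      (continuous_const.inner continuous_id : Continuous fun θ => ⟪S.p, θ⟫).continuousOn
  exact ⟨θs, hθs, fun θ hθ => hmax hθ⟩

theorem mem_idSet_iff_of_eq (hJ : J1 = J) {θ : EuclideanSpace ℝ (Fin d)} :
    θ ∈ S.idSet ↔ θ ∈ S.Θ ∧ ∀ j, S.g j θ ≤ 0 := by
  refine and_congr_right fun _ => forall_congr' fun j => ?_
  have hj : (j : ℕ) < J1 := hJ ▸ j.isLt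
  simp [hj, not_le.2 hj]

section LocalDescent

variable {S} {θs t : EuclideanSpace ℝ (Fin d)} {ρ c δ L : ℝ}

theorem g_le_of_mem_shrunk (hJ : J1 = J) (hB : closedBall θs ρ ⊆ S.Θ) (ht : ‖t‖ = 1)
    (hstep : ∀ j, ∀ x ∈ closedBall θs ρ, ∀ s : ℝ, 0 ≤ s → x + s • t ∈ closedBall θs ρ →
      S.g j (x + s • t) ≤ max (S.g j x - c * s) (-(δ / 2)))
    {θ : EuclideanSpace ℝ (Fin d)} {ε : ℝ} (hθ : θ ∈ S.shrunk ε) (hε : 0 ≤ ε)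
    (hθρ : ‖θ - θs‖ + ε ≤ ρ) (hcδ : c * ε ≤ δ) (j : Fin J) : S.g j θ ≤ -(c / 2) * ε := by
  rcases hε.eq_or_lt with rfl | hεpos
  · simpa using ((S.mem_idSet_iff_of_eq hJ).1 hθ.1).2 j
  set θ₂ := θ - (ε / 2) • t
  have hθθ₂ : ‖θ - θ₂‖ = ε / 2 := by
    rw [sub_sub_cancel, norm_smul, ht, mul_one, Real.norm_of_nonneg (by positivity)]
  have hθB : θ ∈ closedBall θs ρ := by
    rw [mem_closedBall, dist_eq_norm]; linarith [norm_nonneg (θ - θs)]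
  have hθ₂B : θ₂ ∈ closedBall θs ρ := by
    rw [mem_closedBall, dist_eq_norm]
    calc ‖θ₂ - θs‖ ≤ ‖θ₂ - θ‖ + ‖θ - θs‖ := norm_sub_le_norm_sub_add_norm_sub _ _ _
      _ ≤ ρ := by rw [norm_sub_rev, hθθ₂]; linarith
  have hθ₂I : θ₂ ∈ S.idSet := by
    by_contra hθ₂I
    have hlt : dist θ θ₂ < infDist θ (S.Θ \ S.idSet) := by
      rw [dist_eq_norm, hθθ₂]; linarith [hθ.2]
    exact notMem_of_dist_lt_infDist hlt ⟨hB hθ₂B, hθ₂I⟩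
  have hg₂ := ((S.mem_idSet_iff_of_eq hJ).1 hθ₂I).2 j
  have h := hstep j θ₂ hθ₂B (ε / 2) (by positivity) (by simpa [θ₂] using hθB)
  rw [show θ₂ + (ε / 2) • t = θ by simp [θ₂]] at h
  exact h.trans (max_le (by linarith) (by linarith))

theorem mem_shrunk_of_forall_g_le (hJ : J1 = J) (hne : (S.Θ \ S.idSet).Nonempty)
    (hB : closedBall θs ρ ⊆ S.Θ)
    (hLip : ∀ j, ∀ x ∈ closedBall θs ρ, ∀ y ∈ closedBall θs ρ, S.g j y ≤ S.g j x + L * ‖y - x‖)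
    (hL : 0 ≤ L) {θ : EuclideanSpace ℝ (Fin d)} {ε : ℝ} (hε : 0 ≤ ε)
    (hθρ : ‖θ - θs‖ + ε ≤ ρ) (hg : ∀ j, S.g j θ ≤ -(L * ε)) : θ ∈ S.shrunk ε := by
  have hθB : θ ∈ closedBall θs ρ := by
    rw [mem_closedBall, dist_eq_norm]; linarith
  refine ⟨(S.mem_idSet_iff_of_eq hJ).2 ⟨hB hθB, fun j => (hg j).trans (by nlinarith)⟩, ?_⟩
  by_contra! hlt
  obtain ⟨y, ⟨hyΘ, hyI⟩, hy⟩ := (infDist_lt_iff hne).1 hlt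
  rw [dist_comm, dist_eq_norm] at hy
  have hyB : y ∈ closedBall θs ρ := by
    rw [mem_closedBall, dist_eq_norm]
    linarith [norm_sub_le_norm_sub_add_norm_sub y θ θs]
  refine hyI ((S.mem_idSet_iff_of_eq hJ).2 ⟨hyΘ, fun j => ?_⟩)
  calc S.g j y ≤ S.g j θ + L * ‖y - θ‖ := hLip j θ hθB y hyB
    _ ≤ -(L * ε) + L * ε := add_le_add (hg j) (mul_le_mul_of_nonneg_left hy.le hL)
    _ = 0 := by ring

theorem degenerateAt_of_descent (hJ : J1 = J) (hne : (S.Θ \ S.idSet).Nonempty)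
    (hρ : 0 < ρ) (hδ : 0 < δ) (hc : 0 < c) (hcL : c ≤ L) (ht : ‖t‖ = 1)
    (hB : closedBall θs ρ ⊆ S.Θ)
    (hstep : ∀ j, ∀ x ∈ closedBall θs ρ, ∀ s : ℝ, 0 ≤ s → x + s • t ∈ closedBall θs ρ →
      S.g j (x + s • t) ≤ max (S.g j x - c * s) (-(δ / 2)))
    (hLip : ∀ j, ∀ x ∈ closedBall θs ρ, ∀ y ∈ closedBall θs ρ, S.g j y ≤ S.g j x + L * ‖y - x‖) :
    S.DegenerateAt θs := by
  set M := L / c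
  have hM : 1 ≤ M := (one_le_div hc).2 hcL
  have hcM : c * M = L := mul_div_cancel₀ L hc.ne'
  obtain ⟨δ₀, hδ₀, hsmall⟩ := mem_nhdsGE_iff_exists_Icc_subset.1 <|
    ((eventually_mul_le_nhds_zero L (half_pos hδ)).and
      (eventually_mul_le_nhds_zero M (by positivity : 0 < ρ / 4))).filter_mono nhdsWithin_le_nhds
  refine ⟨δ₀, hδ₀, ρ / 4, by positivity, M, by positivity, c / 2, by positivity,
    fun ε hε => ?_⟩
  obtain ⟨hLε, hMε⟩ : L * ε ≤ δ / 2 ∧ M * ε ≤ ρ / 4 := hsmall hε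
  have hεM : ε ≤ M * ε := le_mul_of_one_le_left hε.1 hM
  have hMε₀ : 0 ≤ M * ε := hε.1.trans hεM
  refine ⟨fun θ hθ hθη j => ?_, fun θ hθ hθη => ?_⟩
  · exact g_le_of_mem_shrunk hJ hB ht hstep hθ hε.1 (by linarith) (by nlinarith) j
  set θ' := θ + (M * ε) • t
  have hθθ' : ‖θ' - θ‖ = M * ε := by
    rw [add_sub_cancel_left, norm_smul, ht, mul_one, Real.norm_of_nonneg hMε₀]
  have hθ'ρ : ‖θ' - θs‖ + ε ≤ ρ := by
    linarith [norm_sub_le_norm_sub_add_norm_sub θ' θ θs]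
  have hθB : θ ∈ closedBall θs ρ := by
    rw [mem_closedBall, dist_eq_norm]; linarith
  have hθ'B : θ' ∈ closedBall θs ρ := by
    rw [mem_closedBall, dist_eq_norm]; linarith [hε.1]
  have hg : ∀ j, S.g j θ' ≤ -(L * ε) := fun j => by
    have hgθ := ((S.mem_idSet_iff_of_eq hJ).1 hθ).2 j
    refine (hstep j θ hθB (M * ε) hMε₀ hθ'B).trans (max_le ?_ (by linarith))
    rw [← hcM]; nlinarith
  calc infEDist θ (S.shrunk ε) ≤ edist θ θ' :=
        infEDist_le_edist_of_mem
          (mem_shrunk_of_forall_g_le hJ hne hB hLip (hc.le.trans hcL) hε.1 hθ'ρ hg)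
    _ = ENNReal.ofReal (M * ε) := by rw [edist_dist, dist_comm, dist_eq_norm, hθθ']

end LocalDescent

variable {S} {θs : EuclideanSpace ℝ (Fin d)}

theorem degenerateAt_of_uniformMFCQAt (hJ : J1 = J) (hIint : S.idSet ⊆ interior S.Θ)
    (hθs : θs ∈ S.idSet) (h : S.UniformMFCQAt θs) : S.DegenerateAt θs := by
  obtain ⟨δ, hδ, ε, hε, t, ht, hnear⟩ := h
  have := S.nontrivial_space
  have hne := S.compactΘ.nonempty_diff_of_subset_interior hIint ⟨θs, hθs⟩
  have hfar : ∀ j, ∀ᶠ θ in 𝓝 θs, S.g j θs < -δ → S.g j θ ≤ -(δ / 2) := fun j => by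
    by_cases hj : S.g j θs < -δ
    · filter_upwards [(S.continuous_g j).continuousAt.eventually
        (eventually_le_nhds (by linarith : S.g j θs < -(δ / 2)))] with θ hθ _ using hθ
    · exact Eventually.of_forall fun θ hj' => absurd hj' hj
  have hΘ : ∀ᶠ θ in 𝓝 θs, θ ∈ S.Θ := mem_interior_iff_mem_nhds.1 (hIint hθs)
  obtain ⟨ρ, hρ, hball⟩ := nhds_basis_closedBall.eventually_iff.1 <| hΘ.and
      ((S.eventually_norm_D_sub_le θs (half_pos hε)).and (eventually_all.2 hfar))
  have hlin : ∀ j, ∀ x ∈ closedBall θs ρ, ∀ y ∈ closedBall θs ρ,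
      |S.g j y - S.g j x - ⟪S.D j θs, y - x⟫| ≤ ε / 2 * ‖y - x‖ := fun j _ hx _ hy =>
    (convex_closedBall θs ρ).abs_sub_sub_inner_le_of_hasGradientAt (fun x _ => S.hgrad j x)
      (fun _ hz => (hball hz).2.1 j) hx hy
  have hB : closedBall θs ρ ⊆ S.Θ := fun θ hθ => (hball hθ).1
  have hstep : ∀ j, ∀ x ∈ closedBall θs ρ, ∀ s : ℝ, 0 ≤ s → x + s • t ∈ closedBall θs ρ →
      S.g j (x + s • t) ≤ max (S.g j x - ε / 2 * s) (-(δ / 2)) := by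
    intro j x hx s hs hxs
    by_cases hj : -δ ≤ S.g j θs
    · have h := abs_le.1 (hlin j x hx _ hxs)
      rw [add_sub_cancel_left, real_inner_smul_right, norm_smul, ht, mul_one,
        Real.norm_of_nonneg hs] at h
      exact le_max_of_le_left (by nlinarith [hnear j hj])
    · exact le_max_of_le_right ((hball hxs).2.2 j (not_le.1 hj))
  have hLip : ∀ j, ∀ x ∈ closedBall θs ρ, ∀ y ∈ closedBall θs ρ,
      S.g j y ≤ S.g j x + (∑ i, ‖S.D i θs‖ + ε / 2) * ‖y - x‖ := by
    intro j x hx y hy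
    have h := abs_le.1 (hlin j x hx y hy)
    have hD : ‖S.D j θs‖ ≤ ∑ i, ‖S.D i θs‖ :=
      Finset.single_le_sum (fun i _ => norm_nonneg (S.D i θs)) (Finset.mem_univ j)
    linarith [h.2, real_inner_le_norm (S.D j θs) (y - x),
      mul_le_mul_of_nonneg_right hD (norm_nonneg (y - x))]
  have hcL : ε / 2 ≤ ∑ i, ‖S.D i θs‖ + ε / 2 :=
    le_add_of_nonneg_left (Finset.sum_nonneg fun i _ => norm_nonneg _)
  exact degenerateAt_of_descent hJ hne hρ hδ (half_pos hε) hcL ht hB hstep hLip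

theorem DegenerateAt.eventually_exists_deep_point (h : S.DegenerateAt θs) (hθs : θs ∈ S.idSet) :
    ∃ M > (0:ℝ), ∃ C > (0:ℝ), ∀ᶠ ε in 𝓝[>] 0,
      ∃ θ ∈ S.idSet, ‖θ - θs‖ ≤ 2 * M * ε ∧ ∀ j, S.g j θ ≤ -C * ε := by
  obtain ⟨δ, hδ, η, hη, M, hM, C, hC, h⟩ := h
  refine ⟨M, hM, C, hC, ?_⟩
  filter_upwards [self_mem_nhdsWithin, ((eventually_mul_le_nhds_zero 1 hδ).and
    (eventually_mul_le_nhds_zero (2 * M) hη)).filter_mono nhdsWithin_le_nhds]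
    with ε (hε : 0 < ε) ⟨hεδ, hεη⟩
  obtain ⟨hdeep, hnear⟩ := h ε ⟨hε.le, by linarith⟩
  have hlt : infEDist θs (S.shrunk ε) < ENNReal.ofReal (2 * M * ε) :=
    (hnear θs hθs (by simp [hη.le])).trans_lt
      ((ENNReal.ofReal_lt_ofReal_iff (by positivity)).2 (by nlinarith))
  obtain ⟨θ, hθ, hθd⟩ := infEDist_lt_iff.1 hlt
  rw [edist_dist, ENNReal.ofReal_lt_ofReal_iff_of_nonneg dist_nonneg, dist_comm,
    dist_eq_norm] at hθd
  exact ⟨θ, hθ.1, hθd.le, hdeep θ hθ (hθd.le.trans (by linarith))⟩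

theorem uniformMFCQAt_of_degenerateAt (h : S.DegenerateAt θs) (hθs : θs ∈ S.idSet) :
    S.UniformMFCQAt θs := by
  have := S.nontrivial_space
  obtain ⟨M, hM, C, hC, hdeep⟩ := h.eventually_exists_deep_point hθs
  obtain ⟨ρ, hρ, hD⟩ := nhds_basis_closedBall.eventually_iff.1 <|
    S.eventually_norm_D_sub_le θs (κ := C / (8 * M)) (by positivity)
  obtain ⟨ε, ⟨θ, -, hθ, hgθ⟩, hερ, hε⟩ := (hdeep.and <|
    ((eventually_mul_le_nhds_zero (2 * M) hρ).filter_mono nhdsWithin_le_nhds).and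
      self_mem_nhdsWithin).exists
  have hθB : θ ∈ closedBall θs ρ := by rw [mem_closedBall, dist_eq_norm]; linarith
  have hinner : ∀ j, -(C * ε / 4) ≤ S.g j θs → ⟪S.D j θs, θ - θs⟫ ≤ -(C * ε / 2) := by
    intro j hj
    have h := abs_le.1 <| (convex_closedBall θs ρ).abs_sub_sub_inner_le_of_hasGradientAt
      (fun x _ => S.hgrad j x) (fun _ hz => hD hz j) (mem_closedBall_self hρ.le) hθB
    have hκ : C / (8 * M) * ‖θ - θs‖ ≤ C * ε / 4 := by
      calc C / (8 * M) * ‖θ - θs‖ ≤ C / (8 * M) * (2 * M * ε) := by gcongr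
        _ = C * ε / 4 := by field_simp; ring
    linarith [hgθ j]
  obtain ⟨u, hu, hu'⟩ := exists_norm_eq_one_forall_inner_le_neg_div (by positivity) hθ hinner
  refine ⟨C * ε / 4, by positivity, C / (4 * M), by positivity, u, hu, fun j hj => ?_⟩
  calc ⟪S.D j θs, u⟫ ≤ -(C * ε / 2 / (2 * M * ε)) := hu' j hj
    _ = -(C / (4 * M)) := by field_simp; ring

theorem UniformMFCQAt.mfcqAt (h : S.UniformMFCQAt θs) : S.MFCQAt θs := by
  obtain ⟨δ, hδ, ε, hε, t, -, ht⟩ := h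
  exact ⟨t, fun j hj => (ht j (by linarith)).trans_lt (neg_neg_of_pos hε)⟩

theorem MFCQAt.uniformMFCQAt (hJ : J1 = J) (hθs : θs ∈ S.idSet) (h : S.MFCQAt θs) :
    S.UniformMFCQAt θs := by
  have := S.nontrivial_space
  obtain ⟨t, ht⟩ := h
  obtain ⟨η, hη, hnear⟩ := exists_pos_forall_le_neg_of_eq_zero_imp_neg
    ((S.mem_idSet_iff_of_eq hJ).1 hθs).2 ht
  obtain ⟨u, hu, hu'⟩ := exists_norm_eq_one_forall_inner_le_neg_div hη
    (le_add_of_nonneg_right zero_le_one : ‖t‖ ≤ ‖t‖ + 1) hnear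
  exact ⟨η, hη, η / (‖t‖ + 1), by positivity, u, hu, hu'⟩

theorem J1_eq_of_degeneracy (hIne : S.idSet.Nonempty) (h : S.degeneracy) : J1 = J := by
  obtain ⟨θs, hθs⟩ := S.suppSet_nonempty hIne
  have hdeg : S.DegenerateAt θs := h θs hθs
  obtain ⟨_, -, C, hC, hdeep⟩ := hdeg.eventually_exists_deep_point hθs.1
  obtain ⟨ε, ⟨θ, hθ, -, hg⟩, hε⟩ := (hdeep.and self_mem_nhdsWithin).exists
  by_contra hne
  have hlt : J1 < J := S.hJ1.lt_of_ne hne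
  have heq : S.g ⟨J1, hlt⟩ θ = 0 := (hθ.2 ⟨J1, hlt⟩).2 le_rfl
  nlinarith [hg ⟨J1, hlt⟩]

end PISetup

/-- Theorem 1, claim 1: Assumption 2 (Degeneracy), Assumption 6, and the conjunction of
"no equality constraints" with MFCQ at every support point are all equivalent. -/
theorem degeneracy_iff_assumption6_iff_noeq_MFCQ {d J J1 : ℕ} (S : PISetup d J J1)
    (hIne : S.idSet.Nonempty) (hIint : S.idSet ⊆ interior S.Θ) :
    (S.degeneracy ↔
      (J1 = J ∧ ∀ θs ∈ S.suppSet, ∃ δ > (0:ℝ), ∃ ε > (0:ℝ),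
        ∃ t : EuclideanSpace ℝ (Fin d), ‖t‖ = 1 ∧
          ∀ j : Fin J, -δ ≤ S.g j θs → ⟪S.D j θs, t⟫ ≤ -ε)) ∧
    ((J1 = J ∧ ∀ θs ∈ S.suppSet, ∃ δ > (0:ℝ), ∃ ε > (0:ℝ),
        ∃ t : EuclideanSpace ℝ (Fin d), ‖t‖ = 1 ∧
          ∀ j : Fin J, -δ ≤ S.g j θs → ⟪S.D j θs, t⟫ ≤ -ε) ↔
      (J1 = J ∧ ∀ θs ∈ S.suppSet, ∃ t : EuclideanSpace ℝ (Fin d),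
          ∀ j : Fin J, S.g j θs = 0 → ⟪S.D j θs, t⟫ < 0)) := by
  refine ⟨⟨fun h => ⟨S.J1_eq_of_degeneracy hIne h, fun θs hθs =>
      PISetup.uniformMFCQAt_of_degenerateAt (h θs hθs) hθs.1⟩, ?_⟩,
    and_congr_right fun hJ => forall₂_congr fun θs hθs =>
      ⟨PISetup.UniformMFCQAt.mfcqAt, PISetup.MFCQAt.uniformMFCQAt hJ hθs.1⟩⟩
  rintro ⟨hJ, h⟩ θs hθs
  exact PISetup.degenerateAt_of_uniformMFCQAt hJ hIint hθs.1 (h θs hθs)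
end
end

section
/- Under the Setup, suppose J1 = J (no equality constraints) and MFCQ holds at every support point, i.e., for every θ* ∈ S(p,Θ_I) there exists t ∈ ℝ^d with D_j(θ*)·t < 0 for all j ∈ J*(θ*). Then Assumption 3' holds: for each support point θ* ∈ S(p,Θ_I) there exist constants η > 0 and C > 0 such that Q(θ) ≥ C·d(θ,Θ_I) for all θ ∈ B(θ*,η). -/
open Filter Topology Metric RealInnerProductSpace

noncomputable section

/-- Theorem 1, claim 2: with no equality constraints, MFCQ at every support point
implies Assumption 3′. -/
theorem noeq_MFCQ_implies_assumption3' {d J J1 : ℕ} (S : PISetup d J J1)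
    (hIne : S.idSet.Nonempty) (hIint : S.idSet ⊆ interior S.Θ)
    (hnoeq : J1 = J)
    (hMFCQ : ∀ θs ∈ S.suppSet, ∃ t : EuclideanSpace ℝ (Fin d),
      ∀ j : Fin J, S.g j θs = 0 → ⟪S.D j θs, t⟫ < 0) :
    ∀ θs ∈ S.suppSet, ∃ η > (0:ℝ), ∃ C > (0:ℝ),
      ∀ θ ∈ S.ball θs η, S.crit θ ≥ C * infDist θ S.idSet := by
    classical
  intro θs hθs
  haveI hFin : Nonempty (Fin J) := ⟨⟨0, S.hJ⟩⟩
  have hθI : θs ∈ S.idSet := hθs.1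
  obtain ⟨hθΘ, hθg⟩ := hθI
  have hθI : θs ∈ S.idSet := ⟨hθΘ, hθg⟩
  have hgle : ∀ j : Fin J, S.g j θs ≤ 0 := fun j => (hθg j).1 (hnoeq ▸ j.isLt)
  -- MFCQ direction, nonzero
  obtain ⟨t0, ht0⟩ := hMFCQ θs hθs
  obtain ⟨t1, ht1, ht1ne⟩ : ∃ t1 : EuclideanSpace ℝ (Fin d),
      (∀ j, S.g j θs = 0 → ⟪S.D j θs, t1⟫ < 0) ∧ t1 ≠ 0 := by
    by_cases h0 : t0 = 0
    · refine ⟨EuclideanSpace.single ⟨0, S.hd⟩ 1, ?_, ?_⟩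
      · intro j hj
        exfalso
        have := ht0 j hj
        rw [h0, inner_zero_right] at this
        exact lt_irrefl 0 this
      · intro h
        have := congrArg (fun v : EuclideanSpace ℝ (Fin d) => v ⟨0, S.hd⟩) h
        simp [EuclideanSpace.single_apply] at this
    · exact ⟨t0, ht0, h0⟩
  set t : EuclideanSpace ℝ (Fin d) := ‖t1‖⁻¹ • t1 with ht_def
  have htnorm : ‖t‖ = 1 := norm_smul_inv_norm ht1ne
  have ht : ∀ j, S.g j θs = 0 → ⟪S.D j θs, t⟫ < 0 := by
    intro j hj
    rw [ht_def, real_inner_smul_right]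
    exact mul_neg_of_pos_of_neg (inv_pos.mpr (norm_pos_iff.mpr ht1ne)) (ht1 j hj)
  -- margin δ
  set f : Fin J → ℝ := fun j => if S.g j θs = 0 then -⟪S.D j θs, t⟫ else 1 with hf_def
  set δ : ℝ := Finset.univ.inf' Finset.univ_nonempty f with hδ_def
  have hδpos : 0 < δ := by
    rw [hδ_def, Finset.lt_inf'_iff]
    intro j _
    by_cases hj : S.g j θs = 0
    · simp only [hf_def, if_pos hj]
      linarith [ht j hj]
    · simp [hf_def, if_neg hj]
  have hδle : ∀ j, S.g j θs = 0 → ⟪S.D j θs, t⟫ ≤ -δ := by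
    intro j hj
    have h : δ ≤ f j := Finset.inf'_le (f := f) (Finset.mem_univ j)
    rw [hf_def] at h
    simp only [if_pos hj] at h
    linarith
  -- continuity radius r
  have hev : ∀ᶠ x in 𝓝 θs, x ∈ S.Θ ∧ ∀ j : Fin J,
      (S.g j θs < 0 → S.g j x < 0) ∧ (S.g j θs = 0 → ⟪S.D j x, t⟫ ≤ -δ/2) := by
    have h1 : ∀ᶠ x in 𝓝 θs, x ∈ S.Θ :=
      Filter.mem_of_superset (isOpen_interior.mem_nhds (hIint hθI)) interior_subset
    refine h1.and (Filter.eventually_all.mpr fun j => ?_)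
    rcases (hgle j).lt_or_eq with hlt | heq
    · have hc : ContinuousAt (S.g j) θs := (S.hgrad j θs).hasFDerivAt.differentiableAt.continuousAt
      have h2 : ∀ᶠ x in 𝓝 θs, S.g j x < 0 := hc (Iio_mem_nhds hlt)
      exact h2.mono fun x hx => ⟨fun _ => hx, fun h => absurd h (ne_of_lt hlt)⟩
    · have hc : ContinuousAt (fun x => ⟪S.D j x, t⟫) θs :=
        ((S.hgradCont j).inner continuous_const).continuousAt
      have hval : ⟪S.D j θs, t⟫ < -δ/2 := by
        have := hδle j heq
        linarith
      have h2 : ∀ᶠ x in 𝓝 θs, ⟪S.D j x, t⟫ < -δ/2 := hc (Iio_mem_nhds hval)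
      exact h2.mono fun x hx => ⟨fun h => absurd heq (ne_of_lt h), fun _ => le_of_lt hx⟩
  obtain ⟨r, hrpos, hr⟩ := Metric.nhds_basis_closedBall.eventually_iff.mp hev
  -- smallness radius η0
  have hev2 : ∀ᶠ x in 𝓝 θs, ∀ j : Fin J, S.g j x ≤ δ * r / 4 := by
    refine Filter.eventually_all.mpr fun j => ?_
    have hc : ContinuousAt (S.g j) θs := (S.hgrad j θs).hasFDerivAt.differentiableAt.continuousAt
    have hval : S.g j θs < δ * r / 4 := lt_of_le_of_lt (hgle j) (by positivity)
    have h2 : ∀ᶠ x in 𝓝 θs, S.g j x < δ * r / 4 := hc (Iio_mem_nhds hval)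
    exact h2.mono fun x hx => le_of_lt hx
  obtain ⟨η0, hη0pos, hη0⟩ := Metric.nhds_basis_closedBall.eventually_iff.mp hev2
  set η : ℝ := min (r/2) η0 with hη_def
  have hηpos : 0 < η := lt_min (by positivity) hη0pos
  refine ⟨η, hηpos, δ/2, by positivity, ?_⟩
  intro θ hθ
  obtain ⟨hθΘ', hθdist⟩ := hθ
  set q := S.crit θ with hq_def
  have hq0 : 0 ≤ q := le_max_left _ _
  have hdθ : dist θ θs ≤ η := by rw [dist_eq_norm]; exact hθdist
  have hgleq : ∀ j : Fin J, S.g j θ ≤ q := by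
    intro j
    have hj1 : (j : ℕ) < J1 := hnoeq ▸ j.isLt
    have hb : BddAbove (Set.range fun j : Fin J =>
        if (j : ℕ) < J1 then S.g j θ else |S.g j θ|) :=
      (Set.finite_range _).bddAbove
    have h := le_ciSup hb j
    rw [if_pos hj1] at h
    exact h.trans (le_max_right _ _)
  have hqsmall : q ≤ δ * r / 4 := by
    refine max_le (by positivity) (ciSup_le fun j => ?_)
    rw [if_pos (show (j : ℕ) < J1 from hnoeq ▸ j.isLt)]
    exact hη0 (Metric.mem_closedBall.mpr (hdθ.trans (min_le_right _ _))) j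
  set s : ℝ := 2 * q / δ with hs_def
  have hs0 : 0 ≤ s := by positivity
  have hsr : s ≤ r / 2 := by
    rw [hs_def, div_le_iff₀ hδpos]
    nlinarith
  have hmem_ball : ∀ u : ℝ, 0 ≤ u → u ≤ s → θ + u • t ∈ Metric.closedBall θs r := by
    intro u hu0 hus
    rw [Metric.mem_closedBall, dist_eq_norm]
    have heq : θ + u • t - θs = (θ - θs) + u • t := by abel
    calc ‖θ + u • t - θs‖ ≤ ‖θ - θs‖ + ‖u • t‖ := by rw [heq]; exact norm_add_le _ _
      _ ≤ η + u := by
          rw [norm_smul, htnorm, mul_one, Real.norm_eq_abs, abs_of_nonneg hu0]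
          exact add_le_add_left hθdist u
      _ ≤ r/2 + r/2 := add_le_add ((min_le_left _ _)) (hus.trans hsr)
      _ = r := by ring
  -- derivative of g j along the line
  have hline : ∀ x : ℝ, HasDerivAt (fun u : ℝ => θ + u • t) t x := by
    intro x
    simpa using ((hasDerivAt_id x).smul_const t).const_add θ
  have hderiv : ∀ (j : Fin J) (x : ℝ),
      HasDerivAt (fun u : ℝ => S.g j (θ + u • t)) ⟪S.D j (θ + x • t), t⟫ x := by
    intro j x
    have hg := (S.hgrad j (θ + x • t)).hasFDerivAt
    have h := hg.comp_hasDerivAt x (hline x)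
    simp [InnerProductSpace.toDual_apply_apply] at h
    exact h
  have hin : θ + s • t ∈ S.idSet := by
    refine ⟨(hr (hmem_ball s hs0 le_rfl)).1, fun j => ⟨fun _ => ?_,
      fun hJ1le => absurd (hnoeq ▸ j.isLt) (not_lt.mpr hJ1le)⟩⟩
    rcases (hgle j).lt_or_eq with hlt | heq
    · exact le_of_lt (((hr (hmem_ball s hs0 le_rfl)).2 j).1 hlt)
    · rcases hq0.eq_or_lt with hq0' | hqpos
      · have hs : s = 0 := by rw [hs_def, ← hq0']; ring
        rw [hs, zero_smul, add_zero]
        exact (hgleq j).trans hq0'.ge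
      · have hspos : 0 < s := by positivity
        obtain ⟨c, hc, hceq⟩ := exists_hasDerivAt_eq_slope
          (fun u : ℝ => S.g j (θ + u • t)) (fun u : ℝ => ⟪S.D j (θ + u • t), t⟫) hspos
          (fun x _ => ((hderiv j x).continuousAt).continuousWithinAt)
          (fun x _ => hderiv j x)
        have hcball : θ + c • t ∈ Metric.closedBall θs r :=
          hmem_ball c hc.1.le hc.2.le
        have hcle : ⟪S.D j (θ + c • t), t⟫ ≤ -δ/2 :=
          ((hr hcball).2 j).2 heq
        rw [sub_zero] at hceq
        have hval : S.g j (θ + s • t) = S.g j (θ + (0:ℝ) • t)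
            + s * ⟪S.D j (θ + c • t), t⟫ := by
          have h := (div_eq_iff (ne_of_gt hspos)).mp hceq.symm
          rw [mul_comm] at h
          linarith
        rw [zero_smul, add_zero] at hval
        have h1 : s * ⟪S.D j (θ + c • t), t⟫ ≤ s * (-δ/2) :=
          mul_le_mul_of_nonneg_left hcle hs0
        have h2 : s * (-δ/2) = -q := by
          rw [hs_def]; field_simp
        linarith [hgleq j]
  have hdle : infDist θ S.idSet ≤ s := by
    calc infDist θ S.idSet ≤ dist θ (θ + s • t) := infDist_le_dist_of_mem hin
      _ = s := by
          rw [dist_eq_norm]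
          simp [norm_smul, htnorm, abs_of_nonneg hs0]
  calc δ/2 * infDist θ S.idSet ≤ δ/2 * s := by
        exact mul_le_mul_of_nonneg_left hdle (by positivity)
    _ = q := by rw [hs_def]; field_simp
end
end

section
/- Under the Setup, suppose Assumption 7' holds: for each support point θ* ∈ S(p,Θ_I) there exists c > 0 such that p·t ≤ −c‖t‖ for every t in the linearized cone L(θ*). Then for every support point θ* ∈ S(p,Θ_I), the gradients of the active constraints span ℝ^d, i.e., span{D_j(θ*) : j ∈ J*(θ*)} = ℝ^d. In particular, if J*(θ*) has exactly d elements, then the family {D_j(θ*) : j ∈ J*(θ*)} is linearly independent (the Linear Independence Constraint Qualification holds at θ*). -/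
open Filter Topology Metric RealInnerProductSpace

noncomputable section

/-!
Any `v` orthogonal to all active gradients lies, together with `-v`, in the linearized cone.
Assumption 7′ gives `⟪p, v⟫ ≤ -c‖v‖` and `-⟪p, v⟫ ≤ -c‖v‖`, so `v = 0`: the orthogonal
complement of the span is trivial. With exactly `d` active constraints, a spanning family of
`d` vectors in `ℝ^d` is a basis.
-/

theorem eq_zero_of_mem_of_neg_mem_of_inner_le_neg_mul_norm {E : Type*}
    [NormedAddCommGroup E] [InnerProductSpace ℝ E] {K : Set E} {p : E} {c : ℝ} (hc : 0 < c)
    (hK : ∀ t ∈ K, ⟪p, t⟫ ≤ -c * ‖t‖) {v : E} (hv : v ∈ K) (hnv : -v ∈ K) : v = 0 := by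
  have h₁ := hK v hv
  have h₂ := hK (-v) hnv
  rw [inner_neg_right, norm_neg] at h₂
  have : ‖v‖ ≤ 0 := by nlinarith [norm_nonneg v]
  exact norm_le_zero_iff.mp this

theorem linearIndependent_restrict_of_span_image_eq_top {K M ι : Type*} [Field K]
    [AddCommGroup M] [Module K M] [Finite ι] {f : ι → M} {s : Set ι}
    (hspan : Submodule.span K (f '' s) = ⊤) (hcard : s.ncard = Module.finrank K M) :
    LinearIndependent K (fun i : s => f i) := by
  have : Fintype s := Fintype.ofFinite s
  apply linearIndependent_of_top_le_span_of_card_eq_finrank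
  · rw [← Set.image_eq_range, hspan]
  · rwa [Set.ncard_eq_toFinset_card', Set.toFinset_card] at hcard

namespace PISetup

variable {d J J1 : ℕ} (S : PISetup d J J1) (θs : EuclideanSpace ℝ (Fin d))

theorem orthogonal_span_activeGradients_subset_linConeAt :
    ((Submodule.span ℝ ((fun j => S.D j θs) '' S.activeAt θs))ᗮ :
      Set (EuclideanSpace ℝ (Fin d))) ⊆ S.linConeAt θs := by
  intro v hv
  have hperp : ∀ j ∈ S.activeAt θs, ⟪S.D j θs, v⟫ = 0 := by
    intro j hj
    rw [SetLike.mem_coe, Submodule.mem_orthogonal] at hv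
    exact hv _ (Submodule.subset_span (Set.mem_image_of_mem _ hj))
  exact ⟨fun j hj hg => (hperp j (Or.inl ⟨hj, hg⟩)).le, fun j hj => hperp j (Or.inr hj)⟩

theorem span_activeGradients_eq_top {c : ℝ} (hc : 0 < c)
    (hcone : ∀ t ∈ S.linConeAt θs, ⟪S.p, t⟫ ≤ -c * ‖t‖) :
    Submodule.span ℝ ((fun j => S.D j θs) '' S.activeAt θs) = ⊤ := by
  rw [← Submodule.orthogonal_eq_bot_iff, Submodule.eq_bot_iff]
  intro v hv
  have hsub := S.orthogonal_span_activeGradients_subset_linConeAt θs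
  exact eq_zero_of_mem_of_neg_mem_of_inner_le_neg_mul_norm hc hcone (hsub hv)
    (hsub (Submodule.neg_mem _ hv))

end PISetup

theorem assumption7'_implies_span_and_LICQ_general {d J J1 : ℕ} (S : PISetup d J J1)
    (h7' : ∀ θs ∈ S.suppSet, ∃ c > (0:ℝ),
      ∀ t ∈ S.linConeAt θs, ⟪S.p, t⟫ ≤ -c * ‖t‖) :
    ∀ θs ∈ S.suppSet,
      Submodule.span ℝ ((fun j => S.D j θs) '' S.activeAt θs) = ⊤ ∧
      ((S.activeAt θs).ncard = d →
        LinearIndependent ℝ (fun j : S.activeAt θs => S.D j θs)) := by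
  intro θs hθs
  obtain ⟨c, hc, hcone⟩ := h7' θs hθs
  have hspan := S.span_activeGradients_eq_top θs hc hcone
  refine ⟨hspan, fun hcard => linearIndependent_restrict_of_span_image_eq_top hspan ?_⟩
  rw [hcard, finrank_euclideanSpace_fin]

/-- Theorem 1, claim 6: Assumption 7′ implies that at every support point the gradients
of the active constraints span `ℝ^d`; in particular, if there are exactly `d` active
constraints, LICQ holds. -/
theorem assumption7'_implies_span_and_LICQ {d J J1 : ℕ} (S : PISetup d J J1)
    (hIne : S.idSet.Nonempty) (hIint : S.idSet ⊆ interior S.Θ)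
    (h7' : ∀ θs ∈ S.suppSet, ∃ c > (0:ℝ),
      ∀ t ∈ S.linConeAt θs, ⟪S.p, t⟫ ≤ -c * ‖t‖) :
    ∀ θs ∈ S.suppSet,
      Submodule.span ℝ ((fun j => S.D j θs) '' S.activeAt θs) = ⊤ ∧
      ((S.activeAt θs).ncard = d →
        LinearIndependent ℝ (fun j : S.activeAt θs => S.D j θs)) :=
  assumption7'_implies_span_and_LICQ_general S h7'
end
end

section
/- Under the Setup, suppose Assumption 7' holds: for each support point θ* ∈ S(p,Θ_I) there exists c > 0 such that p·t ≤ −c‖t‖ for every t in the linearized cone L(θ*). Then Assumption 4' holds; more precisely, for each support point θ* ∈ S(p,Θ_I) there exist constants η > 0 and C > 0 such that Q(θ) ≥ C·‖θ − θ*‖ for all θ ∈ B(θ*,η) ∩ H(p,Θ_I), and consequently Q(θ) ≥ C·d(θ, S(p,Θ_I)) for all θ ∈ B(θ*,η) ∩ H(p,Θ_I). -/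
open Filter Topology Metric RealInnerProductSpace

noncomputable section

/-- Theorem 1, claim 7: Assumption 7′ implies Assumption 4′; more precisely, near each
support point `θ*` the criterion grows at least linearly in `‖θ - θ*‖` along the
supporting hyperplane, and consequently at least linearly in the distance to the
support set. -/
theorem assumption7'_implies_assumption4' {d J J1 : ℕ} (S : PISetup d J J1)
    (hIne : S.idSet.Nonempty) (hIint : S.idSet ⊆ interior S.Θ)
    (h7' : ∀ θs ∈ S.suppSet, ∃ c > (0:ℝ),
      ∀ t ∈ S.linConeAt θs, ⟪S.p, t⟫ ≤ -c * ‖t‖) :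
    ∀ θs ∈ S.suppSet, ∃ η > (0:ℝ), ∃ C > (0:ℝ),
      (∀ θ ∈ S.ball θs η ∩ S.hyper θs, S.crit θ ≥ C * ‖θ - θs‖) ∧
      (∀ θ ∈ S.ball θs η ∩ S.hyper θs, S.crit θ ≥ C * infDist θ S.suppSet) := by
  intro θs hθs
  have hθsId : θs ∈ S.idSet := hθs.1
  -- basic facts about crit
  have hcrit0 : ∀ θ, (0:ℝ) ≤ S.crit θ := fun θ => le_max_left 0 _
  have hbdd : ∀ θ, BddAbove (Set.range fun j : Fin J =>
      if (j : ℕ) < J1 then S.g j θ else |S.g j θ|) :=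
    fun θ => (Set.finite_range _).bddAbove
  have hcrit_lt : ∀ (j : Fin J) θ, (j : ℕ) < J1 → S.g j θ ≤ S.crit θ := by
    intro j θ hj
    have h1 : (if (j : ℕ) < J1 then S.g j θ else |S.g j θ|) ≤
        ⨆ j : Fin J, if (j : ℕ) < J1 then S.g j θ else |S.g j θ| := le_ciSup (hbdd θ) j
    rw [if_pos hj] at h1
    exact h1.trans (le_max_right _ _)
  have hcrit_ge : ∀ (j : Fin J) θ, J1 ≤ (j : ℕ) → |S.g j θ| ≤ S.crit θ := by
    intro j θ hj
    have h1 : (if (j : ℕ) < J1 then S.g j θ else |S.g j θ|) ≤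
        ⨆ j : Fin J, if (j : ℕ) < J1 then S.g j θ else |S.g j θ| := le_ciSup (hbdd θ) j
    rw [if_neg (not_lt.2 hj)] at h1
    exact h1.trans (le_max_right _ _)
  -- reduce to the first claim
  suffices h : ∃ η > (0:ℝ), ∃ C > (0:ℝ),
      ∀ θ ∈ S.ball θs η ∩ S.hyper θs, S.crit θ ≥ C * ‖θ - θs‖ by
    obtain ⟨η, hη, C, hC, hA⟩ := h
    refine ⟨η, hη, C, hC, hA, fun θ hθ => ?_⟩
    have h1 := hA θ hθ
    have h2 : infDist θ S.suppSet ≤ ‖θ - θs‖ := by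
      simpa [dist_eq_norm] using infDist_le_dist_of_mem hθs
    nlinarith
  by_contra hcon
  push_neg at hcon
  have hex : ∀ n : ℕ, ∃ θ, (θ ∈ S.ball θs (1/((n:ℝ)+1)) ∩ S.hyper θs) ∧
      S.crit θ < (1/((n:ℝ)+1)) * ‖θ - θs‖ := by
    intro n
    obtain ⟨θ, h1, h2⟩ := hcon (1/((n:ℝ)+1)) (by positivity) (1/((n:ℝ)+1)) (by positivity)
    exact ⟨θ, h1, h2⟩
  choose θ hθmem hθlt using hex
  have hnorm_pos : ∀ n, 0 < ‖θ n - θs‖ := by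
    intro n
    rcases (norm_nonneg (θ n - θs)).lt_or_eq with h | h
    · exact h
    · exfalso
      have := hθlt n
      rw [← h] at this
      simp at this
      exact absurd this (not_lt.2 (hcrit0 _))
  -- θ n → θs
  have hθtend : Tendsto θ atTop (𝓝 θs) := by
    rw [tendsto_iff_norm_sub_tendsto_zero]
    refine squeeze_zero (fun n => norm_nonneg _) (fun n => (hθmem n).1.2) ?_
    exact tendsto_one_div_add_atTop_nhds_zero_nat
  -- normalized directions
  set u : ℕ → EuclideanSpace ℝ (Fin d) := fun n => ‖θ n - θs‖⁻¹ • (θ n - θs) with hu_def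
  have hu_sphere : ∀ n, u n ∈ sphere (0 : EuclideanSpace ℝ (Fin d)) 1 := by
    intro n
    rw [mem_sphere_zero_iff_norm, norm_smul, norm_inv, norm_norm,
      inv_mul_cancel₀ (hnorm_pos n).ne']
  obtain ⟨t, ht_sphere, φ, hφ, huφ⟩ := (isCompact_sphere (0 : EuclideanSpace ℝ (Fin d)) 1).tendsto_subseq hu_sphere
  have ht_norm : ‖t‖ = 1 := mem_sphere_zero_iff_norm.1 ht_sphere
  have hφtop : Tendsto φ atTop atTop := hφ.tendsto_atTop
  -- the o(1) remainder of each constraint along the sequence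
  have hrem : ∀ j : Fin J, Tendsto
      (fun n => (S.g j (θ n) - S.g j θs - ⟪S.D j θs, θ n - θs⟫) / ‖θ n - θs‖) atTop (𝓝 0) := by
    intro j
    have h1 := (S.hgrad j θs).hasFDerivAt.isLittleO
    have h2 : (fun θ' => S.g j θ' - S.g j θs - ⟪S.D j θs, θ' - θs⟫) =o[𝓝 θs]
        fun θ' => θ' - θs := by
      simpa [InnerProductSpace.toDual_apply_apply] using h1
    exact ((h2.comp_tendsto hθtend).norm_right).tendsto_div_nhds_zero
  -- key identity: ⟪D j θs, u n⟫ = (g j (θ n) - g j θs)/‖θ n - θs‖ - remainder n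
  have hkey : ∀ (j : Fin J) (n : ℕ), ⟪S.D j θs, u n⟫ =
      (S.g j (θ n) - S.g j θs) / ‖θ n - θs‖ -
      (S.g j (θ n) - S.g j θs - ⟪S.D j θs, θ n - θs⟫) / ‖θ n - θs‖ := by
    intro j n
    show ⟪S.D j θs, ‖θ n - θs‖⁻¹ • (θ n - θs)⟫ = _
    rw [real_inner_smul_right, div_sub_div_same, sub_sub_cancel, div_eq_inv_mul]
  -- inner products with directions converge
  have hinner : ∀ v : EuclideanSpace ℝ (Fin d),
      Tendsto (fun n => ⟪v, u (φ n)⟫) atTop (𝓝 ⟪v, t⟫) :=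
    fun v => tendsto_const_nhds.inner huφ
  -- p ⟂ t
  have hpt : ⟪S.p, t⟫ = 0 := by
    have h1 : ∀ n, ⟪S.p, u (φ n)⟫ = 0 := by
      intro n
      have h2 : ⟪S.p, θ (φ n) - θs⟫ = 0 := by
        rw [inner_sub_right, (hθmem (φ n)).2.2, sub_self]
      show ⟪S.p, ‖θ (φ n) - θs‖⁻¹ • (θ (φ n) - θs)⟫ = 0
      rw [real_inner_smul_right, h2, mul_zero]
    have := hinner S.p
    rw [show (fun n => ⟪S.p, u (φ n)⟫) = fun _ => (0:ℝ) from funext h1] at this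
    exact tendsto_nhds_unique this tendsto_const_nhds
  -- bound on constraint ratios along the sequence
  have hone : Tendsto (fun n : ℕ => 1/((φ n : ℝ)+1)) atTop (𝓝 0) :=
    tendsto_one_div_add_atTop_nhds_zero_nat.comp hφtop
  -- t belongs to the linearized cone
  have htL : t ∈ S.linConeAt θs := by
    constructor
    · intro j hj hgj0
      have hb : ∀ n, ⟪S.D j θs, u (φ n)⟫ ≤ 1/((φ n : ℝ)+1) -
          (S.g j (θ (φ n)) - S.g j θs - ⟪S.D j θs, θ (φ n) - θs⟫) / ‖θ (φ n) - θs‖ := by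
        intro n
        rw [hkey j (φ n)]
        have h1 : S.g j (θ (φ n)) ≤ S.crit (θ (φ n)) := hcrit_lt j _ hj
        have h2 := hθlt (φ n)
        have h3 : (S.g j (θ (φ n)) - S.g j θs) / ‖θ (φ n) - θs‖ ≤ 1/((φ n : ℝ)+1) := by
          rw [hgj0, sub_zero, div_le_iff₀ (hnorm_pos (φ n))]
          calc S.g j (θ (φ n)) ≤ S.crit (θ (φ n)) := h1
            _ ≤ 1/((φ n : ℝ)+1) * ‖θ (φ n) - θs‖ := le_of_lt h2
        linarith
      have hrhs : Tendsto (fun n => 1/((φ n : ℝ)+1) -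
          (S.g j (θ (φ n)) - S.g j θs - ⟪S.D j θs, θ (φ n) - θs⟫) / ‖θ (φ n) - θs‖) atTop
          (𝓝 0) := by
        have := hone.sub ((hrem j).comp hφtop)
        simpa using this
      exact le_of_tendsto_of_tendsto' (hinner (S.D j θs)) hrhs hb
    · intro j hj
      have hgj0 : S.g j θs = 0 := (hθsId.2 j).2 hj
      have hratio : Tendsto (fun n => (S.g j (θ (φ n)) - S.g j θs) / ‖θ (φ n) - θs‖)
          atTop (𝓝 0) := by
        refine squeeze_zero_norm (fun n => ?_) hone
        have h1 : |S.g j (θ (φ n))| ≤ S.crit (θ (φ n)) := hcrit_ge j _ hj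
        have h2 := hθlt (φ n)
        rw [Real.norm_eq_abs, hgj0, sub_zero, abs_div, abs_of_pos (hnorm_pos (φ n)),
          div_le_iff₀ (hnorm_pos (φ n))]
        calc |S.g j (θ (φ n))| ≤ S.crit (θ (φ n)) := h1
          _ ≤ 1/((φ n : ℝ)+1) * ‖θ (φ n) - θs‖ := le_of_lt h2
      have hzero : Tendsto (fun n => ⟪S.D j θs, u (φ n)⟫) atTop (𝓝 0) := by
        have heq : (fun n => ⟪S.D j θs, u (φ n)⟫) = fun n =>
            (S.g j (θ (φ n)) - S.g j θs) / ‖θ (φ n) - θs‖ -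
            (S.g j (θ (φ n)) - S.g j θs - ⟪S.D j θs, θ (φ n) - θs⟫) / ‖θ (φ n) - θs‖ :=
          funext fun n => hkey j (φ n)
        rw [heq]
        simpa using hratio.sub ((hrem j).comp hφtop)
      exact tendsto_nhds_unique (hinner (S.D j θs)) hzero
  -- contradiction with Assumption 7'
  obtain ⟨c, hc, hlin⟩ := h7' θs hθs
  have := hlin t htL
  rw [hpt, ht_norm, mul_one] at this
  linarith
end
end
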